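/- Let λ = (λ_1,…,λ_n) be a tuple of nonnegative integers such that λ_i = λ_{i+1} + 1 for some 1 ≤ i ≤ n−1, and let λ* be the tuple obtained from λ by replacing (λ_i, λ_{i+1}) with (λ_i − 1, λ_{i+1} + 1). Then, in the polynomial ring ℚ[t][x_1,…,x_n], Σ_{σ ∈ S_n} sgn(σ) · σ(x^{λ*} · Δ_n(t)) = t · Σ_{σ ∈ S_n} sgn(σ) · σ(x^λ · Δ_n(t)). -/
import Mathlib


open MvPolynomial Finset

noncomputable section

/-- The polynomial ring `ℚ[t][x_1, …, x_n]`. -/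
abbrev A13 (n : ℕ) : Type := MvPolynomial (Fin n) (Polynomial ℚ)

/-- The element `t`. -/
def t13 (n : ℕ) : A13 n := C Polynomial.X

/-- The deformed Weyl denominator `Δ_n(t) = ∏_{i<j} (x_i - t x_j)`. -/
def Dlt (n : ℕ) : A13 n := ∏ i : Fin n, ∏ j ∈ Finset.Ioi i, (X i - t13 n * X j)

lemma Dlt_pairs (n : ℕ) :
    Dlt n = ∏ p ∈ Finset.univ.filter (fun p : Fin n × Fin n => p.1 < p.2),
      (X p.1 - t13 n * X p.2) := by
  rw [Dlt, Finset.prod_sigma']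
  apply Finset.prod_nbij' (fun p => (p.1, p.2)) (fun p => ⟨p.1, p.2⟩) <;>
    simp [Finset.mem_sigma, Finset.mem_Ioi]

lemma swap_lt {n : ℕ} {a b : Fin n} (hab : (a : ℕ) + 1 = (b : ℕ))
    {p : Fin n × Fin n} (hp : p.1 < p.2) (hne : p ≠ (a, b)) :
    Equiv.swap a b p.1 < Equiv.swap a b p.2 := by
  have hab' : a ≠ b := by simp [Fin.ext_iff]; omega
  rcases eq_or_ne p.1 a with h1a | h1a
  · rcases eq_or_ne p.2 b with h2b | h2b
    · exact absurd (Prod.ext h1a h2b) hne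
    · have h2a : p.2 ≠ a := by
        intro hh; rw [h1a, hh] at hp; exact lt_irrefl _ hp
      rw [h1a, Equiv.swap_apply_left, Equiv.swap_apply_of_ne_of_ne h2a h2b]
      rw [Fin.lt_def] at hp ⊢
      rw [h1a] at hp
      have : (p.2 : ℕ) ≠ (b : ℕ) := fun hh => h2b (Fin.ext hh)
      omega
  · rcases eq_or_ne p.1 b with h1b | h1b
    · have h2a : p.2 ≠ a := by
        intro hh; rw [Fin.lt_def, h1b, hh] at hp; omega
      have h2b : p.2 ≠ b := by
        intro hh; rw [hh] at hp; exact absurd (h1b ▸ hp) (lt_irrefl _)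
      rw [h1b, Equiv.swap_apply_right, Equiv.swap_apply_of_ne_of_ne h2a h2b]
      rw [Fin.lt_def] at hp ⊢
      rw [h1b] at hp
      omega
    · rw [Equiv.swap_apply_of_ne_of_ne h1a h1b]
      rcases eq_or_ne p.2 a with h2a | h2a
      · rw [h2a, Equiv.swap_apply_left]
        rw [Fin.lt_def] at hp ⊢
        rw [h2a] at hp
        omega
      · rcases eq_or_ne p.2 b with h2b | h2b
        · rw [h2b, Equiv.swap_apply_right]
          rw [Fin.lt_def] at hp ⊢
          rw [h2b] at hp
          have : (p.1 : ℕ) ≠ (a : ℕ) := fun hh => h1a (Fin.ext hh)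
          omega
        · rw [Equiv.swap_apply_of_ne_of_ne h2a h2b]; exact hp

lemma key_Dlt {n : ℕ} {a b : Fin n} (hab : (a : ℕ) + 1 = (b : ℕ)) :
    (X a - t13 n * X b) * rename (Equiv.swap a b) (Dlt n) =
      (X b - t13 n * X a) * Dlt n := by
  have hlt : a < b := by rw [Fin.lt_def]; omega
  have hab' : a ≠ b := ne_of_lt hlt
  set s := Equiv.swap a b with hs
  set P : Finset (Fin n × Fin n) := Finset.univ.filter (fun p => p.1 < p.2) with hP
  have hmem : (a, b) ∈ P := by simp [hP, hlt]
  have hren : rename s (Dlt n) = ∏ p ∈ P, (X (s p.1) - t13 n * X (s p.2)) := by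
    rw [Dlt_pairs, map_prod]
    refine Finset.prod_congr rfl fun p _ => ?_
    simp [t13]
  have hQ : ∏ p ∈ P.erase (a, b), (X (s p.1) - t13 n * X (s p.2)) =
      ∏ p ∈ P.erase (a, b), (X p.1 - t13 n * X p.2) := by
    apply Finset.prod_nbij' (fun p => (s p.1, s p.2)) (fun p => (s p.1, s p.2))
    · intro p hp
      rw [Finset.mem_erase] at hp ⊢
      obtain ⟨hne, hpP⟩ := hp
      rw [hP, Finset.mem_filter] at hpP ⊢
      refine ⟨?_, Finset.mem_univ _, swap_lt hab hpP.2 hne⟩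
      intro hh
      have h1 : s p.1 = a := congrArg Prod.fst hh
      have h2 : s p.2 = b := congrArg Prod.snd hh
      have : p.1 = b := by
        have := congrArg s h1; simpa [hs] using this
      have : p.2 = a := by
        have := congrArg s h2; simpa [hs] using this
      have := hpP.2
      rw [‹p.1 = b›, ‹p.2 = a›] at this
      exact absurd this (not_lt_of_gt hlt)
    · intro p hp
      rw [Finset.mem_erase] at hp ⊢
      obtain ⟨hne, hpP⟩ := hp
      rw [hP, Finset.mem_filter] at hpP ⊢
      refine ⟨?_, Finset.mem_univ _, swap_lt hab hpP.2 hne⟩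
      intro hh
      have h1 : s p.1 = a := congrArg Prod.fst hh
      have h2 : s p.2 = b := congrArg Prod.snd hh
      have e1 : p.1 = b := by
        have := congrArg s h1; simpa [hs] using this
      have e2 : p.2 = a := by
        have := congrArg s h2; simpa [hs] using this
      have := hpP.2
      rw [e1, e2] at this
      exact absurd this (not_lt_of_gt hlt)
    · intro p _; simp [hs]
    · intro p _; simp [hs]
    · intro p _; rfl
  rw [hren, Dlt_pairs, ← Finset.prod_erase_mul P _ hmem,
      ← Finset.prod_erase_mul P _ hmem, hQ]
  simp [hs]
  ring

lemma alt_zero {n : ℕ} (g : A13 n) (s : Equiv.Perm (Fin n))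
    (hs : Equiv.Perm.sign s = -1) (hg : rename (⇑s) g = g) :
    ∑ σ : Equiv.Perm (Fin n), ((Equiv.Perm.sign σ : ℤ) : A13 n) * rename σ g = 0 := by
  set F : Equiv.Perm (Fin n) → A13 n :=
    fun σ => ((Equiv.Perm.sign σ : ℤ) : A13 n) * rename σ g with hF
  have h1 : ∑ σ, F σ = ∑ σ, F (σ * s) :=
    (Fintype.sum_equiv (Equiv.mulRight s) _ _ (fun σ => rfl)).symm
  have h2 : ∀ σ, F (σ * s) = -F σ := by
    intro σ
    have hsgn : ((Equiv.Perm.sign (σ * s) : ℤ) : A13 n) =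
        -((Equiv.Perm.sign σ : ℤ) : A13 n) := by
      rw [Equiv.Perm.sign_mul, hs]
      push_cast
      ring
    have hren : rename (⇑(σ * s)) g = rename (⇑σ) g := by
      rw [Equiv.Perm.coe_mul, ← rename_rename, hg]
    rw [hF]
    simp only [hsgn, hren]
    ring
  rw [Finset.sum_congr rfl (fun σ _ => h2 σ), Finset.sum_neg_distrib] at h1
  have h3 : (2 : A13 n) * ∑ σ, F σ = 0 := by
    rw [two_mul]
    nth_rewrite 2 [h1]
    simp
  rcases mul_eq_zero.mp h3 with h | h
  · exact absurd h two_ne_zero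
  · exact h

lemma prod_pow_update {n : ℕ} (f : Fin n → ℕ) (a : Fin n) (v : ℕ) :
    ∏ k : Fin n, (X k : A13 n) ^ Function.update f a v k =
      (∏ k ∈ Finset.univ.erase a, (X k : A13 n) ^ f k) * X a ^ v := by
  rw [← Finset.prod_erase_mul _ _ (Finset.mem_univ a)]
  congr 1
  · exact Finset.prod_congr rfl fun k hk => by
      rw [Function.update_of_ne (Finset.ne_of_mem_erase hk)]
  · rw [Function.update_self]

set_option maxHeartbeats 2000000 in
/-- **Alternating sum identity.** If `λ` is a tuple of nonnegative integers with
`λ_i = λ_{i+1} + 1` and `λ*` is obtained by replacing `(λ_i, λ_{i+1})` with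
`(λ_i - 1, λ_{i+1} + 1)`, then in `ℚ[t][x_1,…,x_n]`:
`Σ_σ sgn(σ) σ(x^{λ*} Δ_n(t)) = t ⬝ Σ_σ sgn(σ) σ(x^λ Δ_n(t))`. -/
theorem alternating_sum_shift (n : ℕ) (lam : Fin n → ℕ) (i : ℕ) (hi : i + 1 < n)
    (h : lam ⟨i, by omega⟩ = lam ⟨i + 1, hi⟩ + 1) :
    (∑ σ : Equiv.Perm (Fin n), ((Equiv.Perm.sign σ : ℤ) : A13 n) *
        rename σ ((∏ k : Fin n,
            X k ^ (Function.update (Function.update lam ⟨i, by omega⟩ (lam ⟨i, by omega⟩ - 1))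
              ⟨i + 1, hi⟩ (lam ⟨i + 1, hi⟩ + 1)) k) * Dlt n)) =
      t13 n * ∑ σ : Equiv.Perm (Fin n), ((Equiv.Perm.sign σ : ℤ) : A13 n) *
        rename σ ((∏ k : Fin n, X k ^ lam k) * Dlt n) := by
  set a : Fin n := ⟨i, by omega⟩ with ha
  set b : Fin n := ⟨i + 1, hi⟩ with hb
  have hab : (a : ℕ) + 1 = (b : ℕ) := rfl
  have hab' : a ≠ b := by simp [ha, hb, Fin.ext_iff]
  set s := Equiv.swap a b with hs
  set μ : Fin n → ℕ := Function.update lam a (lam b) with hμ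
  set W : A13 n := ∏ k : Fin n, X k ^ μ k with hW
  -- the two monomials
  have hsub : lam a - 1 = lam b := by omega
  have hM : (∏ k : Fin n, (X k : A13 n) ^ lam k) = W * X a := by
    rw [hW, hμ, prod_pow_update, ← Finset.prod_erase_mul _ _ (Finset.mem_univ a), h]
    rw [pow_succ]
    ring
  have hMstar : (∏ k : Fin n, (X k : A13 n) ^
      (Function.update (Function.update lam a (lam a - 1)) b (lam b + 1)) k) = W * X b := by
    rw [hsub, ← hμ, prod_pow_update]
    have hWe : W = (∏ k ∈ Finset.univ.erase b, (X k : A13 n) ^ μ k) * X b ^ lam b := by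
      rw [hW, ← Finset.prod_erase_mul _ _ (Finset.mem_univ b)]
      congr 1
      rw [hμ, Function.update_of_ne (Ne.symm hab')]
    rw [hWe, pow_succ]
    ring
  -- invariance of W
  have hμs : ∀ k, μ (s k) = μ k := by
    intro k
    rcases eq_or_ne k a with rfl | hka
    · rw [hs, Equiv.swap_apply_left, hμ, Function.update_self,
        Function.update_of_ne (Ne.symm hab')]
    · rcases eq_or_ne k b with rfl | hkb
      · rw [hs, Equiv.swap_apply_right, hμ, Function.update_self,
          Function.update_of_ne (Ne.symm hab')]
      · rw [hs, Equiv.swap_apply_of_ne_of_ne hka hkb]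
  have hWinv : rename (⇑s) W = W := by
    rw [hW, map_prod]
    simp only [map_pow, rename_X]
    calc ∏ k : Fin n, (X (s k) : A13 n) ^ μ k
        = ∏ k : Fin n, (X (s k) : A13 n) ^ μ (s k) :=
          Finset.prod_congr rfl fun k _ => by rw [hμs]
      _ = ∏ k : Fin n, (X k : A13 n) ^ μ k := Equiv.prod_comp s (fun k => (X k : A13 n) ^ μ k)
  -- the invariant polynomial g
  set g : A13 n := W * ((X b - t13 n * X a) * Dlt n) with hg
  have hginv : rename (⇑s) g = g := by
    rw [hg, map_mul, map_mul, map_sub, map_mul, rename_X, rename_X, hWinv]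
    rw [hs, Equiv.swap_apply_left, Equiv.swap_apply_right]
    have ht : rename (⇑(Equiv.swap a b)) (t13 n) = t13 n := by simp [t13]
    rw [ht, ← hs]
    congr 1
    rw [hs]
    exact key_Dlt hab
  have hsgn : Equiv.Perm.sign s = -1 := Equiv.Perm.sign_swap hab'
  have key := alt_zero g s hsgn hginv
  -- assembling
  rw [← sub_eq_zero]
  have hts : ∀ σ : Equiv.Perm (Fin n),
      t13 n * (((Equiv.Perm.sign σ : ℤ) : A13 n) * rename σ ((∏ k : Fin n, X k ^ lam k) * Dlt n)) =
      ((Equiv.Perm.sign σ : ℤ) : A13 n) *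
        rename σ (t13 n * ((∏ k : Fin n, X k ^ lam k) * Dlt n)) := by
    intro σ
    have hct : rename (⇑σ) (t13 n) = t13 n := by simp [t13]
    simp only [map_mul, hct]
    ring
  rw [Finset.mul_sum, Finset.sum_congr rfl (fun σ _ => hts σ), ← Finset.sum_sub_distrib]
  have hsummand : ∀ σ : Equiv.Perm (Fin n),
      ((Equiv.Perm.sign σ : ℤ) : A13 n) *
        rename σ ((∏ k : Fin n,
            X k ^ (Function.update (Function.update lam a (lam a - 1)) b (lam b + 1)) k) * Dlt n) -
      ((Equiv.Perm.sign σ : ℤ) : A13 n) *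
        rename σ (t13 n * ((∏ k : Fin n, X k ^ lam k) * Dlt n)) =
      ((Equiv.Perm.sign σ : ℤ) : A13 n) * rename σ g := by
    intro σ
    rw [← mul_sub, ← map_sub]
    congr 2
    rw [hMstar, hM, hg]
    ring
  rw [Finset.sum_congr rfl (fun σ _ => hsummand σ)]
  exact key

end
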